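/- arXiv:2009.12748 — 3 statements merged into one kernel-verified Lean document; each statement's English description precedes it below -/
import Mathlib

section
/- Let 0 < t_f ≤ ∞ and let V, k : [0, t_f) → ℝ be continuously differentiable functions with V(t) ≥ 0 for all t ∈ [0, t_f). Let a₀ ≠ 0 be a constant, let N₀ : ℝ → ℝ be an even, smooth Nussbaum function, and let c be a constant. If V(t) ≤ ∫₀ᵗ (a₀ N₀(k(τ)) + 1) k'(τ) dτ + c for all t ∈ [0, t_f), then V(t), k(t) and t ↦ ∫₀ᵗ (a₀ N₀(k(τ)) + 1) k'(τ) dτ are bounded on [0, t_f). -/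
open MeasureTheory Filter
open scoped ENNReal

/-- The average `(1/q) ∫₀^q N₀(s) ds` appearing in the definition of a Nussbaum function. -/
noncomputable def nussAvg (N₀ : ℝ → ℝ) (q : ℝ) : ℝ := (1 / q) * ∫ s in (0:ℝ)..q, N₀ s

/-- A continuously differentiable function `N₀ : ℝ → ℝ` is a Nussbaum function if
`limsup_{q→∞} (1/q)∫₀^q N₀(s) ds = +∞` and `liminf_{q→∞} (1/q)∫₀^q N₀(s) ds = −∞`. -/
def IsNussbaum (N₀ : ℝ → ℝ) : Prop :=
  ContDiff ℝ 1 N₀ ∧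
  Filter.limsup (fun q : ℝ => (nussAvg N₀ q : EReal)) Filter.atTop = ⊤ ∧
  Filter.liminf (fun q : ℝ => (nussAvg N₀ q : EReal)) Filter.atTop = ⊥

/-- The domain `[0, t_f)` where `0 < t_f ≤ ∞`. -/
def domTF (tf : ℝ≥0∞) : Set ℝ := {t : ℝ | 0 ≤ t ∧ ENNReal.ofReal t < tf}

lemma freq_gt {f : ℝ → ℝ}
    (h : Filter.limsup (fun q : ℝ => (f q : EReal)) Filter.atTop = ⊤) (b : ℝ) :
    ∃ᶠ q in atTop, b < f q := by
  have hc : IsCoboundedUnder (· ≤ ·) atTop (fun q : ℝ => (f q : EReal)) :=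
    isCoboundedUnder_le_of_le _ (fun i => bot_le)
  have := frequently_lt_of_lt_limsup hc (h ▸ EReal.coe_lt_top b)
  exact this.mono (fun q hq => by exact_mod_cast hq)

lemma freq_lt {f : ℝ → ℝ}
    (h : Filter.liminf (fun q : ℝ => (f q : EReal)) Filter.atTop = ⊥) (b : ℝ) :
    ∃ᶠ q in atTop, f q < b := by
  have hc : IsCoboundedUnder (· ≥ ·) atTop (fun q : ℝ => (f q : EReal)) :=
    isCoboundedUnder_ge_of_le _ (fun i => le_top)
  have := frequently_lt_of_liminf_lt hc (h ▸ EReal.bot_lt_coe b)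
  exact this.mono (fun q hq => by exact_mod_cast hq)

/-- Lemma 1: if `V(t) ≤ ∫₀ᵗ (a₀ N₀(k(τ)) + 1) k'(τ) dτ + c` on `[0, t_f)`, with `V ≥ 0`,
`a₀ ≠ 0` and `N₀` an even smooth Nussbaum function, then `V`, `k` and
`t ↦ ∫₀ᵗ (a₀ N₀(k(τ)) + 1) k'(τ) dτ` are bounded on `[0, t_f)`. -/
theorem nussbaum_boundedness
    (tf : ℝ≥0∞) (htf : 0 < tf)
    (V k dV dk : ℝ → ℝ)
    (hV : ∀ t ∈ domTF tf, HasDerivAt V (dV t) t)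
    (hk : ∀ t ∈ domTF tf, HasDerivAt k (dk t) t)
    (hdVcont : ContinuousOn dV (domTF tf))
    (hdkcont : ContinuousOn dk (domTF tf))
    (hVnonneg : ∀ t ∈ domTF tf, 0 ≤ V t)
    (a₀ : ℝ) (ha₀ : a₀ ≠ 0) (c : ℝ)
    (N₀ : ℝ → ℝ) (hEven : ∀ x, N₀ (-x) = N₀ x) (hSmooth : ContDiff ℝ (⊤ : ℕ∞) N₀)
    (hNuss : IsNussbaum N₀)
    (hbound : ∀ t ∈ domTF tf,
      V t ≤ (∫ τ in (0:ℝ)..t, (a₀ * N₀ (k τ) + 1) * dk τ) + c) :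
    ∃ C : ℝ, ∀ t ∈ domTF tf,
      |V t| ≤ C ∧ |k t| ≤ C ∧
      |∫ τ in (0:ℝ)..t, (a₀ * N₀ (k τ) + 1) * dk τ| ≤ C := by
  obtain ⟨-, hTop, hBot⟩ := hNuss
  set G : ℝ → ℝ := fun x => ∫ s in (0:ℝ)..x, (a₀ * N₀ s + 1) with hGdef
  have hNcont : Continuous N₀ := hSmooth.continuous
  have hicont : Continuous (fun s => a₀ * N₀ s + 1) := by continuity
  have hG : ∀ x, HasDerivAt G (a₀ * N₀ x + 1) x := fun x =>
    (hicont.integral_hasStrictDerivAt 0 x).hasDerivAt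
  have hdom : ∀ t ∈ domTF tf, Set.Icc (0:ℝ) t ⊆ domTF tf := by
    intro t ht τ hτ
    exact ⟨hτ.1, lt_of_le_of_lt (ENNReal.ofReal_le_ofReal hτ.2) ht.2⟩
  have hkct : ContinuousOn k (domTF tf) := fun t ht =>
    ((hk t ht).continuousAt).continuousWithinAt
  have h0mem : (0:ℝ) ∈ domTF tf := ⟨le_refl 0, by simpa using htf⟩
  -- the integral equals G (k t) - G (k 0)
  have hint : ∀ t ∈ domTF tf,
      (∫ τ in (0:ℝ)..t, (a₀ * N₀ (k τ) + 1) * dk τ) = G (k t) - G (k 0) := by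
    intro t ht
    have ht0 : 0 ≤ t := ht.1
    have hsub : Set.uIcc (0:ℝ) t ⊆ domTF tf := by
      rw [Set.uIcc_of_le ht0]; exact hdom t ht
    refine intervalIntegral.integral_eq_sub_of_hasDerivAt
      (f := fun τ => G (k τ)) (fun τ hτ => (hG (k τ)).comp τ (hk τ (hsub hτ))) ?_
    apply ContinuousOn.intervalIntegrable
    exact ((hicont.comp_continuousOn (hkct.mono hsub)).mul (hdkcont.mono hsub))
  -- key inequality: G (k t) is bounded below
  have hkey : ∀ t ∈ domTF tf, G (k 0) - c ≤ G (k t) := by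
    intro t ht
    have h1 := (hVnonneg t ht).trans (hbound t ht)
    rw [hint t ht] at h1; linarith
  -- formula for G in terms of nussAvg
  have hGavg : ∀ q : ℝ, q ≠ 0 → G q = q * (a₀ * nussAvg N₀ q + 1) := by
    intro q hq
    have h1 : G q = a₀ * (∫ s in (0:ℝ)..q, N₀ s) + q := by
      show (∫ s in (0:ℝ)..q, (a₀ * N₀ s + 1)) = _
      rw [intervalIntegral.integral_add (f := fun s => a₀ * N₀ s) (g := fun _ => (1:ℝ))
          ((continuous_const.mul hNcont).intervalIntegrable 0 q)
        (intervalIntegrable_const), intervalIntegral.integral_const_mul]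
      simp
    rw [h1, nussAvg]; field_simp
  -- G is odd
  have hGodd : ∀ q : ℝ, G (-q) = - G q := by
    intro q
    have h2 : (∫ s in (0:ℝ)..q, (a₀ * N₀ (-s) + 1)) = ∫ s in (-q)..(0:ℝ), (a₀ * N₀ s + 1) := by
      simpa using intervalIntegral.integral_comp_neg (a := (0:ℝ)) (b := q)
        (f := fun s => a₀ * N₀ s + 1)
    have h3 : (∫ s in (0:ℝ)..q, (a₀ * N₀ (-s) + 1)) = G q := by
      congr 1; ext s; rw [hEven]
    have h4 : (∫ s in (-q)..(0:ℝ), (a₀ * N₀ s + 1)) = - G (-q) := by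
      rw [← intervalIntegral.integral_symm]
    linarith [h2, h3, h4]
  -- G takes arbitrarily small values at arbitrarily large arguments
  have hGsmall : ∀ B A : ℝ, ∃ q, A ≤ q ∧ G q < B := by
    intro B A
    have key : ∃ᶠ q in atTop, a₀ * nussAvg N₀ q < -|B| - 2 := by
      rcases ha₀.lt_or_gt with hneg | hpos
      · refine (freq_gt hTop ((-|B| - 2) / a₀)).mono (fun q hq => ?_)
        have h5 := mul_lt_mul_of_neg_left hq hneg
        have h6 : a₀ * ((-|B| - 2) / a₀) = -|B| - 2 := by field_simp
        linarith
      · refine (freq_lt hBot ((-|B| - 2) / a₀)).mono (fun q hq => ?_)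
        have h5 := mul_lt_mul_of_pos_left hq hpos
        have h6 : a₀ * ((-|B| - 2) / a₀) = -|B| - 2 := by field_simp
        linarith
    obtain ⟨q, hq, hP⟩ := frequently_atTop.mp key (max A 1)
    have hq1 : (1:ℝ) ≤ q := le_trans (le_max_right A 1) hq
    refine ⟨q, le_trans (le_max_left A 1) hq, ?_⟩
    rw [hGavg q (by linarith)]
    have hx : a₀ * nussAvg N₀ q + 1 ≤ 0 := by
      have := abs_nonneg B; linarith
    have h7 : q * (a₀ * nussAvg N₀ q + 1) ≤ 1 * (a₀ * nussAvg N₀ q + 1) :=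
      mul_le_mul_of_nonpos_right hq1 hx
    have h8 := neg_abs_le B
    linarith
  -- G takes arbitrarily large values at arbitrarily large arguments
  have hGbig : ∀ B A : ℝ, ∃ q, A ≤ q ∧ B < G q := by
    intro B A
    have key : ∃ᶠ q in atTop, |B| + 2 < a₀ * nussAvg N₀ q := by
      rcases ha₀.lt_or_gt with hneg | hpos
      · refine (freq_lt hBot ((|B| + 2) / a₀)).mono (fun q hq => ?_)
        have h5 := mul_lt_mul_of_neg_left hq hneg
        have h6 : a₀ * ((|B| + 2) / a₀) = |B| + 2 := by field_simp
        linarith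
      · refine (freq_gt hTop ((|B| + 2) / a₀)).mono (fun q hq => ?_)
        have h5 := mul_lt_mul_of_pos_left hq hpos
        have h6 : a₀ * ((|B| + 2) / a₀) = |B| + 2 := by field_simp
        linarith
    obtain ⟨q, hq, hP⟩ := frequently_atTop.mp key (max A 1)
    have hq1 : (1:ℝ) ≤ q := le_trans (le_max_right A 1) hq
    refine ⟨q, le_trans (le_max_left A 1) hq, ?_⟩
    rw [hGavg q (by linarith)]
    have hx : 0 ≤ a₀ * nussAvg N₀ q + 1 := by
      have := abs_nonneg B; linarith
    have h7 : 1 * (a₀ * nussAvg N₀ q + 1) ≤ q * (a₀ * nussAvg N₀ q + 1) :=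
      mul_le_mul_of_nonneg_right hq1 hx
    have h8 := le_abs_self B
    linarith
  -- k is bounded
  have hkbdd : ∃ M : ℝ, ∀ t ∈ domTF tf, |k t| ≤ M := by
    by_contra hcon
    push_neg at hcon
    have hcase : (∀ M, ∃ t ∈ domTF tf, M < k t) ∨ (∀ M, ∃ t ∈ domTF tf, k t < -M) := by
      by_contra h
      push_neg at h
      obtain ⟨⟨M1, hM1⟩, ⟨M2, hM2⟩⟩ := h
      obtain ⟨t, ht, habs⟩ := hcon (max M1 M2)
      have h1 := hM1 t ht
      have h2 := hM2 t ht
      have : |k t| ≤ max M1 M2 := abs_le.mpr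
        ⟨by have := le_max_right M1 M2; linarith, le_trans h1 (le_max_left M1 M2)⟩
      linarith
    rcases hcase with hup | hdown
    · -- every y ≥ k 0 is attained
      have hattain : ∀ y, k 0 ≤ y → ∃ t ∈ domTF tf, k t = y := by
        intro y hy
        obtain ⟨t, ht, hty⟩ := hup y
        have hmem : y ∈ Set.Icc (k 0) (k t) := ⟨hy, le_of_lt hty⟩
        have hIVT := intermediate_value_Icc ht.1 (hkct.mono (hdom t ht))
        obtain ⟨s, hs, hsy⟩ := hIVT hmem
        exact ⟨s, hdom t ht hs, hsy⟩
      obtain ⟨q, hq, hGq⟩ := hGsmall (G (k 0) - c) (k 0)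
      obtain ⟨t, ht, hkt⟩ := hattain q hq
      have := hkey t ht
      rw [hkt] at this
      linarith
    · -- every y ≤ k 0 is attained
      have hattain : ∀ y, y ≤ k 0 → ∃ t ∈ domTF tf, k t = y := by
        intro y hy
        obtain ⟨t, ht, hty⟩ := hdown (-y)
        have hmem : y ∈ Set.Icc (k t) (k 0) := ⟨by linarith, hy⟩
        have hIVT := intermediate_value_Icc' ht.1 (hkct.mono (hdom t ht))
        obtain ⟨s, hs, hsy⟩ := hIVT hmem
        exact ⟨s, hdom t ht hs, hsy⟩
      obtain ⟨q, hq, hGq⟩ := hGbig (-(G (k 0) - c)) (-(k 0))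
      obtain ⟨t, ht, hkt⟩ := hattain (-q) (by linarith)
      have h9 := hkey t ht
      rw [hkt, hGodd q] at h9
      linarith
  obtain ⟨M, hM⟩ := hkbdd
  -- bound G on [-M, M]
  have hMnn : 0 ≤ M := le_trans (abs_nonneg (k 0)) (hM 0 h0mem)
  obtain ⟨Gb, hGb⟩ : ∃ Gb, ∀ x ∈ Set.Icc (-M) M, |G x| ≤ Gb := by
    obtain ⟨Gb, hGb⟩ := (isCompact_Icc (a := -M) (b := M)).exists_bound_of_continuousOn
      (fun x _ => (hG x).continuousAt.continuousWithinAt)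
    exact ⟨Gb, fun x hx => hGb x hx⟩
  have hkmem : ∀ t ∈ domTF tf, k t ∈ Set.Icc (-M) M := by
    intro t ht
    have := abs_le.mp (hM t ht)
    exact ⟨this.1, this.2⟩
  refine ⟨M + 2 * Gb + |c|, fun t ht => ?_⟩
  have hGkt := hGb (k t) (hkmem t ht)
  have hGk0 := hGb (k 0) (hkmem 0 h0mem)
  have hGbnn : 0 ≤ Gb := le_trans (abs_nonneg _) hGk0
  have hIbd : |∫ τ in (0:ℝ)..t, (a₀ * N₀ (k τ) + 1) * dk τ| ≤ 2 * Gb := by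
    rw [hint t ht]
    calc |G (k t) - G (k 0)| ≤ |G (k t)| + |G (k 0)| := abs_sub _ _
      _ ≤ 2 * Gb := by linarith
  have hIabs := abs_le.mp hIbd
  refine ⟨?_, ?_, ?_⟩
  · rw [abs_of_nonneg (hVnonneg t ht)]
    have := hbound t ht
    have := le_abs_self c
    have := abs_nonneg c
    linarith
  · have := abs_nonneg c
    linarith [hM t ht]
  · have := abs_nonneg c
    linarith
end

section
/- (Barbalat's lemma) Suppose g : [0,∞) → ℝ is uniformly continuous and the limit lim_{t→∞} ∫₀ᵗ g(s) ds exists and is finite. Then lim_{t→∞} g(t) = 0. -/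
open MeasureTheory Filter

/-- Barbalat's Lemma: if `g : [0,∞) → ℝ` is uniformly continuous and
`lim_{t→∞} ∫₀ᵗ g(s) ds` exists and is finite, then `lim_{t→∞} g(t) = 0`. -/
theorem barbalat (g : ℝ → ℝ)
    (hg : UniformContinuousOn g (Set.Ici 0))
    (hlim : ∃ L : ℝ, Filter.Tendsto (fun t : ℝ => ∫ s in (0:ℝ)..t, g s)
      Filter.atTop (nhds L)) :
    Filter.Tendsto g Filter.atTop (nhds 0) := by
  obtain ⟨L, hL⟩ := hlim
  have hcont : ContinuousOn g (Set.Ici 0) := hg.continuousOn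
  have hI : ∀ a b : ℝ, 0 ≤ a → 0 ≤ b → IntervalIntegrable g volume a b := by
    intro a b ha hb
    exact (hcont.mono (fun x hx => le_trans (le_min ha hb) hx.1)).intervalIntegrable
  by_contra hnot
  rw [Metric.tendsto_atTop] at hnot
  push_neg at hnot
  obtain ⟨ε, hε, hfreq⟩ := hnot
  rw [Metric.uniformContinuousOn_iff] at hg
  obtain ⟨δ, hδ, hδ'⟩ := hg (ε/2) (by linarith)
  set d := δ/2 with hd
  have hd0 : 0 < d := by positivity
  obtain ⟨N, hN⟩ := (Metric.tendsto_atTop.mp hL) (ε*d/8) (by positivity)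
  obtain ⟨t, ht, hgt⟩ := hfreq (max N 0)
  have ht0 : (0:ℝ) ≤ t := le_trans (le_max_right N 0) ht
  have htN : N ≤ t := le_trans (le_max_left N 0) ht
  have hgt' : ε ≤ |g t| := by rwa [Real.dist_eq, sub_zero] at hgt
  have hsum : (∫ s in (0:ℝ)..t, g s) + (∫ s in t..(t+d), g s)
      = ∫ s in (0:ℝ)..(t+d), g s :=
    intervalIntegral.integral_add_adjacent_intervals (hI 0 t le_rfl ht0)
      (hI t (t+d) ht0 (by linarith))
  have h1 := hN t htN
  have h2 := hN (t+d) (by linarith)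
  rw [Real.dist_eq] at h1 h2
  have hsmall : |∫ s in t..(t+d), g s| < ε*d/4 := by
    have heq : (∫ s in t..(t+d), g s)
        = (∫ s in (0:ℝ)..(t+d), g s) - (∫ s in (0:ℝ)..t, g s) := by linarith
    rw [heq]
    have h3 := abs_sub_le (∫ s in (0:ℝ)..(t+d), g s) L (∫ s in (0:ℝ)..t, g s)
    rw [abs_sub_comm L (∫ s in (0:ℝ)..t, g s)] at h3
    linarith
  have hclose : ∀ s ∈ Set.Icc t (t+d), |g s - g t| < ε/2 := by
    intro s hs
    have hs0 : (0:ℝ) ≤ s := le_trans ht0 hs.1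
    have hdist : dist s t < δ := by
      rw [Real.dist_eq, abs_of_nonneg (by linarith [hs.1])]
      have := hs.2
      simp only [hd] at *
      linarith
    have := hδ' s hs0 t ht0 hdist
    rwa [Real.dist_eq] at this
  have hconst : (∫ _ in t..(t+d), (ε/2 : ℝ)) = d * (ε/2) := by
    rw [intervalIntegral.integral_const, smul_eq_mul]
    ring
  have hconst' : (∫ _ in t..(t+d), (-(ε/2) : ℝ)) = d * (-(ε/2)) := by
    rw [intervalIntegral.integral_const, smul_eq_mul]
    ring
  rcases le_abs.mp hgt' with hpos | hneg
  · -- g t ≥ ε : g ≥ ε/2 on the interval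
    have hlow : ∀ s ∈ Set.Icc t (t+d), (ε/2 : ℝ) ≤ g s := by
      intro s hs
      have := abs_lt.mp (hclose s hs)
      linarith
    have hge : d * (ε/2) ≤ ∫ s in t..(t+d), g s := by
      rw [← hconst]
      exact intervalIntegral.integral_mono_on (by linarith)
        intervalIntegrable_const (hI t (t+d) ht0 (by linarith)) hlow
    have := le_abs_self (∫ s in t..(t+d), g s)
    nlinarith
  · -- g t ≤ -ε : g ≤ -ε/2 on the interval
    have hup : ∀ s ∈ Set.Icc t (t+d), g s ≤ (-(ε/2) : ℝ) := by
      intro s hs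
      have := abs_lt.mp (hclose s hs)
      linarith
    have hle : (∫ s in t..(t+d), g s) ≤ d * (-(ε/2)) := by
      rw [← hconst']
      exact intervalIntegral.integral_mono_on (by linarith)
        (hI t (t+d) ht0 (by linarith)) intervalIntegrable_const hup
    have := neg_abs_le (∫ s in t..(t+d), g s)
    nlinarith
end

section
/- Suppose Assumptions 1–3 hold and x* ∈ ℝ^N is a Nash equilibrium. Then there exists a positive constant δ* such that for each δ ∈ (δ*, ∞) and every family of continuously differentiable functions y_i, z_ij : [0,∞) → ℝ (i, j = 1,…,N) satisfying the reference generator equations ẏ_i(t) = −∂f_i/∂x_i(z_i(t)) with z_i = (z_{i1},…,z_{iN}) and ż_ij(t) = −δ δ̄_ij (Σ_{k=1}^N a_ik (z_ij(t) − z_kj(t)) + a_ij (z_ij(t) − y_j(t))) for all t ≥ 0, the following hold: (i) each y_i(t) and z_ij(t) is bounded on [0,∞); (ii) each ẏ_i globally exponentially decays to zero, i.e., there exist constants η₁, η₂ > 0 such that |ẏ_i(t)| ≤ l_i η₁ e^{−η₂ t} for all t ≥ 0 and all i; (iii) each ẏ_i² is integrable over [0,∞), i.e., there exist positive constants c_i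 with ∫₀^∞ ẏ_i(s)² ds ≤ c_i. -/
open MeasureTheory Filter Bornology

/-- The partial derivative `∂f/∂x_i` of `f : ℝ^N → ℝ`. -/
noncomputable def pgrad {N : ℕ} (f : EuclideanSpace ℝ (Fin N) → ℝ) (i : Fin N)
    (x : EuclideanSpace ℝ (Fin N)) : ℝ :=
  fderiv ℝ f x (EuclideanSpace.single i 1)

/-- `xs` is a Nash equilibrium of the game with cost functions `f i`. -/
def IsNashEq {N : ℕ} (f : Fin N → EuclideanSpace ℝ (Fin N) → ℝ)
    (xs : EuclideanSpace ℝ (Fin N)) : Prop :=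
  ∀ i : Fin N, ∀ xi : ℝ, f i xs ≤ f i (WithLp.toLp 2 (Function.update xs i xi))

open Finset

lemma pgrad_eq_zero_at_min {N : ℕ} (f : EuclideanSpace ℝ (Fin N) → ℝ) (hf : ContDiff ℝ (⊤ : ℕ∞) f)
    (i : Fin N) (x : EuclideanSpace ℝ (Fin N))
    (hmin : ∀ t : ℝ, f x ≤ f (WithLp.toLp 2 (Function.update x i t))) : pgrad f i x = 0 := by
  have hupd : ∀ t : ℝ, WithLp.toLp 2 (Function.update x i t) = x + (t - x i) • EuclideanSpace.single i (1:ℝ) := by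
    intro t
    ext j
    by_cases h : j = i
    · subst h
      simp [Function.update_apply, PiLp.add_apply, PiLp.smul_apply,
        EuclideanSpace.single_apply]
    · simp [Function.update_apply, h, PiLp.add_apply, PiLp.smul_apply,
        EuclideanSpace.single_apply]
  have hh : HasDerivAt (fun t : ℝ => x + (t - x i) • EuclideanSpace.single i (1:ℝ))
      (EuclideanSpace.single i (1:ℝ)) (x i) := by
    simpa using
      ((((hasDerivAt_id (x i)).sub_const (x i)).smul_const
        (EuclideanSpace.single i (1:ℝ))).const_add x)
  have hx0 : x + ((x i : ℝ) - x i) • EuclideanSpace.single i (1:ℝ) = x := by simp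
  have hF : HasFDerivAt f (fderiv ℝ f x)
      (x + ((x i : ℝ) - x i) • EuclideanSpace.single i (1:ℝ)) := by
    rw [hx0]
    exact ((hf.differentiable (by simp)) x).hasFDerivAt
  have hd : HasDerivAt (fun t : ℝ => f (WithLp.toLp 2 (Function.update x i t)))
      (fderiv ℝ f x (EuclideanSpace.single i 1)) (x i) := by
    have := hF.comp_hasDerivAt (x i) hh
    simpa [Function.comp_def, hupd] using this
  have hloc : IsLocalMin (fun t : ℝ => f (WithLp.toLp 2 (Function.update x i t))) (x i) := by
    apply Filter.Eventually.of_forall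
    intro t
    simpa [Function.update_eq_self] using hmin t
  exact hloc.hasDerivAt_eq_zero hd


lemma exists_uniform_pd (N : ℕ) (hN : 2 ≤ N) (a : Fin N → Fin N → ℝ)
    (ha_nonneg : ∀ i j, 0 ≤ a i j) (ha_symm : ∀ i j, a i j = a j i)
    (ha_conn : ∀ i j : Fin N, Relation.ReflTransGen (fun u v : Fin N => 0 < a u v) i j) :
    ∃ lam : ℝ, 0 < lam ∧ ∀ j : Fin N, ∀ v : Fin N → ℝ,
      lam * (∑ i, v i ^ 2) ≤ ∑ i, v i * ((∑ k, a i k * (v i - v k)) + a i j * v i) := by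
  have hNpos : 0 < N := by omega
  haveI : NeZero N := ⟨by omega⟩
  set Q : Fin N → (Fin N → ℝ) → ℝ :=
    fun j v => ∑ i, v i * ((∑ k, a i k * (v i - v k)) + a i j * v i) with hQdef
  -- symmetrized form
  have hQsym : ∀ j v, Q j v
      = (∑ i, ∑ k, a i k * (v i - v k) ^ 2) / 2 + ∑ i, a i j * v i ^ 2 := by
    intro j v
    have e1 : Q j v = (∑ i, ∑ k, a i k * (v i * (v i - v k))) + ∑ i, a i j * v i ^ 2 := by
      rw [hQdef]
      rw [← Finset.sum_add_distrib]
      refine Finset.sum_congr rfl fun i _ => ?_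
      rw [mul_add, Finset.mul_sum]
      ring_nf
    have e2 : (∑ i, ∑ k, a i k * (v k * (v k - v i)))
        = ∑ i, ∑ k, a i k * (v i * (v i - v k)) := by
      rw [Finset.sum_comm]
      exact Finset.sum_congr rfl fun i _ => Finset.sum_congr rfl fun k _ => by
        rw [ha_symm i k]
    have e3 : (∑ i, ∑ k, a i k * (v i - v k) ^ 2)
        = (∑ i, ∑ k, a i k * (v i * (v i - v k)))
          + ∑ i, ∑ k, a i k * (v k * (v k - v i)) := by
      rw [← Finset.sum_add_distrib]
      refine Finset.sum_congr rfl fun i _ => ?_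
      rw [← Finset.sum_add_distrib]
      exact Finset.sum_congr rfl fun k _ => by ring
    rw [e1, e3, e2]
    ring
  have hQnn : ∀ j v, 0 ≤ Q j v := by
    intro j v
    rw [hQsym]
    have h1 : 0 ≤ ∑ i, ∑ k, a i k * (v i - v k) ^ 2 :=
      Finset.sum_nonneg fun i _ => Finset.sum_nonneg fun k _ =>
        mul_nonneg (ha_nonneg i k) (sq_nonneg _)
    have h2 : 0 ≤ ∑ i : Fin N, a i j * v i ^ 2 :=
      Finset.sum_nonneg fun i _ => mul_nonneg (ha_nonneg i j) (sq_nonneg _)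
    linarith
  -- strict positivity off zero
  have hQpos : ∀ j (v : Fin N → ℝ), v ≠ 0 → 0 < Q j v := by
    intro j v hv
    rcases lt_or_eq_of_le (hQnn j v) with h | h
    · exact h
    exfalso
    have hsym := hQsym j v
    rw [← h] at hsym
    have h1 : 0 ≤ ∑ i, ∑ k, a i k * (v i - v k) ^ 2 :=
      Finset.sum_nonneg fun i _ => Finset.sum_nonneg fun k _ =>
        mul_nonneg (ha_nonneg i k) (sq_nonneg _)
    have h2 : 0 ≤ ∑ i : Fin N, a i j * v i ^ 2 :=
      Finset.sum_nonneg fun i _ => mul_nonneg (ha_nonneg i j) (sq_nonneg _)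
    have h1z : (∑ i, ∑ k, a i k * (v i - v k) ^ 2) = 0 := by linarith
    have h2z : (∑ i : Fin N, a i j * v i ^ 2) = 0 := by linarith
    have hedge : ∀ i k : Fin N, 0 < a i k → v i = v k := by
      intro i k hik
      have hik' : ∀ i ∈ Finset.univ (α := Fin N),
          (∑ k, a i k * (v i - v k) ^ 2) = 0 := by
        have := (Finset.sum_eq_zero_iff_of_nonneg (fun i _ =>
          Finset.sum_nonneg fun k _ => mul_nonneg (ha_nonneg i k) (sq_nonneg _))).1 h1z
        exact this
      have := (Finset.sum_eq_zero_iff_of_nonneg (fun k _ =>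
        mul_nonneg (ha_nonneg i k) (sq_nonneg _))).1 (hik' i (Finset.mem_univ i)) k
        (Finset.mem_univ k)
      have hsq : (v i - v k) ^ 2 = 0 := by
        rcases mul_eq_zero.1 this with h' | h'
        · exact absurd h' (ne_of_gt hik)
        · exact h'
      have := pow_eq_zero_iff (n := 2) (by norm_num) |>.1 hsq
      linarith [this]
    have hzero2 : ∀ i : Fin N, 0 < a i j → v i = 0 := by
      intro i hij
      have := (Finset.sum_eq_zero_iff_of_nonneg (fun i _ =>
        mul_nonneg (ha_nonneg i j) (sq_nonneg _))).1 h2z i (Finset.mem_univ i)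
      rcases mul_eq_zero.1 this with h' | h'
      · exact absurd h' (ne_of_gt hij)
      · exact pow_eq_zero_iff (n := 2) (by norm_num) |>.1 h'
    have hpath : ∀ p q : Fin N, Relation.ReflTransGen (fun u w : Fin N => 0 < a u w) p q →
        v p = v q := by
      intro p q h
      induction h with
      | refl => rfl
      | tail _ hr ih => exact ih.trans (hedge _ _ hr)
    -- find a neighbor of j
    haveI : Nontrivial (Fin N) := Fin.nontrivial_iff_two_le.mpr hN
    obtain ⟨k, hk⟩ := exists_ne j
    have hconn := ha_conn j k
    rcases (Relation.ReflTransGen.cases_head hconn) with h' | ⟨c, hjc, _⟩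
    · exact hk h'.symm
    have hcj : 0 < a c j := by rw [← ha_symm]; exact hjc
    have hvc : v c = 0 := hzero2 c hcj
    apply hv
    funext i
    have := hpath i c (ha_conn i c)
    simp [this, hvc]
  -- continuity of Q j on EuclideanSpace
  have hcoord : ∀ i : Fin N, Continuous fun v : EuclideanSpace ℝ (Fin N) => v i :=
    fun i => (EuclideanSpace.proj i).continuous
  have hQcont : ∀ j, Continuous fun v : EuclideanSpace ℝ (Fin N) => Q j v := by
    intro j
    rw [hQdef]
    refine continuous_finset_sum _ fun i _ => ?_
    exact (hcoord i).mul
      (((continuous_finset_sum _ fun k _ =>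
        continuous_const.mul ((hcoord i).sub (hcoord k))).add
        (continuous_const.mul (hcoord i))))
  -- minimum on the unit sphere
  have hper : ∀ j : Fin N, ∃ lj : ℝ, 0 < lj ∧ ∀ v : Fin N → ℝ,
      lj * (∑ i, v i ^ 2) ≤ Q j v := by
    intro j
    have hw0 : (EuclideanSpace.single (0 : Fin N) (1:ℝ)) ∈
        Metric.sphere (0 : EuclideanSpace ℝ (Fin N)) 1 := by
      simp [EuclideanSpace.norm_single]
    obtain ⟨w, hwS, hwmin⟩ := (isCompact_sphere (0 : EuclideanSpace ℝ (Fin N)) 1).exists_isMinOn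
      ⟨_, hw0⟩ (hQcont j).continuousOn
    have hwnorm : ‖w‖ = 1 := mem_sphere_zero_iff_norm.1 hwS
    have hwne : (w : Fin N → ℝ) ≠ 0 := by
      intro h
      have : ‖w‖ = 0 := by
        have : w = (0 : EuclideanSpace ℝ (Fin N)) := WithLp.ofLp_injective (p := 2) h
        simp [this]
      rw [hwnorm] at this; norm_num at this
    refine ⟨Q j w, hQpos j w hwne, ?_⟩
    -- homogeneity
    have hhom : ∀ (c : ℝ) (x : Fin N → ℝ), Q j (fun i => c * x i) = c ^ 2 * Q j x := by
      intro c x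
      rw [hQdef, Finset.mul_sum]
      refine Finset.sum_congr rfl fun i _ => ?_
      have : (∑ k, a i k * (c * x i - c * x k)) = c * ∑ k, a i k * (x i - x k) := by
        rw [Finset.mul_sum]
        exact Finset.sum_congr rfl fun k _ => by ring
      rw [this]
      ring
    intro v
    rcases eq_or_ne v 0 with rfl | hv
    · simp [hQdef]
    -- normalize
    have hsum_pos : 0 < ∑ i, v i ^ 2 := by
      rcases Function.ne_iff.1 hv with ⟨i, hi⟩
      have hi' : v i ≠ 0 := hi
      have : 0 < v i ^ 2 := pow_two_pos_of_ne_zero hi'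
      exact lt_of_lt_of_le this (Finset.single_le_sum (f := fun i => v i ^ 2)
        (fun i _ => sq_nonneg _) (Finset.mem_univ i))
    set s : ℝ := Real.sqrt (∑ i, v i ^ 2) with hs
    have hs_pos : 0 < s := Real.sqrt_pos.2 hsum_pos
    have hs_sq : s ^ 2 = ∑ i, v i ^ 2 := Real.sq_sqrt hsum_pos.le
    have hw' : (WithLp.toLp 2 (fun i => s⁻¹ * v i : Fin N → ℝ) : EuclideanSpace ℝ (Fin N)) ∈
        Metric.sphere (0 : EuclideanSpace ℝ (Fin N)) 1 := by
      refine mem_sphere_zero_iff_norm.mpr ?_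
      rw [EuclideanSpace.norm_eq, WithLp.ofLp_toLp]
      have : (∑ i, ‖s⁻¹ * v i‖ ^ 2) = s⁻¹ ^ 2 * ∑ i, v i ^ 2 := by
        rw [Finset.mul_sum]
        refine Finset.sum_congr rfl fun i _ => ?_
        rw [Real.norm_eq_abs, sq_abs]; ring
      rw [this, ← hs_sq]
      have h1 : s⁻¹ ^ 2 * s ^ 2 = 1 := by field_simp
      rw [h1, Real.sqrt_one]
    have hmin := hwmin hw'
    have : Q j (fun i => s⁻¹ * v i) = s⁻¹ ^ 2 * Q j v := hhom s⁻¹ v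
    have hineq : Q j w ≤ s⁻¹ ^ 2 * Q j v := by
      rw [← this]; exact hmin
    have := mul_le_mul_of_nonneg_left hineq (le_of_lt (by positivity : (0:ℝ) < s ^ 2))
    calc Q j w * (∑ i, v i ^ 2) = s ^ 2 * Q j w := by rw [hs_sq]; ring
      _ ≤ s ^ 2 * (s⁻¹ ^ 2 * Q j v) := this
      _ = Q j v := by field_simp
  choose lf h1 h2 using hper
  refine ⟨Finset.univ.inf' Finset.univ_nonempty lf, ?_, ?_⟩
  · rw [Finset.lt_inf'_iff]
    exact fun j _ => h1 j
  · intro j v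
    refine le_trans (mul_le_mul_of_nonneg_right
      (Finset.inf'_le lf (Finset.mem_univ j))
      (Finset.sum_nonneg fun i _ => sq_nonneg _)) (h2 j v)

set_option maxHeartbeats 2000000 in
/-- Lemma 3: boundedness, exponential decay of `ẏ_i`, and square integrability of `ẏ_i`
for the reference generator, under Assumptions 1–3. -/
theorem reference_generator_properties
    (N : ℕ) (hN : 2 ≤ N)
    (f : Fin N → EuclideanSpace ℝ (Fin N) → ℝ) (l : Fin N → ℝ)
    -- Assumption 1
    (hf_smooth : ∀ i, ContDiff ℝ (⊤ : ℕ∞) (f i))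
    (hf_lip : ∀ i, ∀ x z : EuclideanSpace ℝ (Fin N),
      |pgrad (f i) i x - pgrad (f i) i z| ≤ l i * ‖x - z‖)
    -- Assumption 2
    (m : ℝ) (hm : 0 < m)
    (hmono : ∀ x z : EuclideanSpace ℝ (Fin N),
      m * ‖x - z‖ ^ 2 ≤ ∑ i, (x i - z i) * (pgrad (f i) i x - pgrad (f i) i z))
    -- Assumption 3
    (a : Fin N → Fin N → ℝ)
    (ha_nonneg : ∀ i j, 0 ≤ a i j) (ha_symm : ∀ i j, a i j = a j i)
    (ha_diag : ∀ i, a i i = 0)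
    (ha_conn : ∀ i j : Fin N, Relation.ReflTransGen (fun u v : Fin N => 0 < a u v) i j)
    -- fixed positive gains
    (δbar : Fin N → Fin N → ℝ) (hδbar : ∀ i j, 0 < δbar i j)
    -- Nash equilibrium
    (xstar : EuclideanSpace ℝ (Fin N)) (hNash : IsNashEq f xstar) :
    ∃ δs : ℝ, 0 < δs ∧ ∀ δ : ℝ, δs < δ →
      ∀ y : Fin N → ℝ → ℝ, ∀ z : Fin N → Fin N → ℝ → ℝ,
        (∀ i, ∀ t : ℝ, 0 ≤ t →
          HasDerivAt (y i) (-(pgrad (f i) i (WithLp.toLp 2 (fun j => z i j t)))) t) →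
        (∀ i j, ∀ t : ℝ, 0 ≤ t →
          HasDerivAt (z i j)
            (-(δ * δbar i j) *
              ((∑ k, a i k * (z i j t - z k j t)) + a i j * (z i j t - y j t))) t) →
        -- (i) boundedness of y and z
        ((∃ C : ℝ, ∀ i j, ∀ t : ℝ, 0 ≤ t → |y i t| ≤ C ∧ |z i j t| ≤ C) ∧
        -- (ii) global exponential decay of ẏ_i
        (∃ η₁ η₂ : ℝ, 0 < η₁ ∧ 0 < η₂ ∧ ∀ i, ∀ t : ℝ, 0 ≤ t →
          |(-(pgrad (f i) i (WithLp.toLp 2 (fun j => z i j t))))| ≤ l i * η₁ * Real.exp (-η₂ * t)) ∧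
        -- (iii) square integrability of ẏ_i
        (∀ i, ∃ c : ℝ, 0 < c ∧
          IntegrableOn (fun s => (-(pgrad (f i) i (WithLp.toLp 2 (fun j => z i j s)))) ^ 2) (Set.Ioi 0) ∧
          ∫ s in Set.Ioi (0:ℝ), (-(pgrad (f i) i (WithLp.toLp 2 (fun j => z i j s)))) ^ 2 ≤ c)) := by
  have hNpos : 0 < N := by omega
  haveI : NeZero N := ⟨by omega⟩
  have i0 : Fin N := ⟨0, hNpos⟩
  have hgrad0 : ∀ i, pgrad (f i) i xstar = 0 := fun i =>
    pgrad_eq_zero_at_min (f i) (hf_smooth i) i xstar (fun t => hNash i t)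
  -- norms in coordinates
  have hnorm : ∀ w x : EuclideanSpace ℝ (Fin N),
      ‖w - x‖ = Real.sqrt (∑ i, (w i - x i) ^ 2) := by
    intro w x
    rw [EuclideanSpace.norm_eq]
    congr 1
    refine Finset.sum_congr rfl fun i _ => ?_
    rw [Real.norm_eq_abs, sq_abs]
    norm_num [PiLp.sub_apply]
  -- m ≤ l i
  have hlm : ∀ i, m ≤ l i := by
    intro i
    have h := hmono (EuclideanSpace.single i (1:ℝ)) 0
    have hn : ‖EuclideanSpace.single i (1:ℝ) - 0‖ = 1 := by
      rw [sub_zero, EuclideanSpace.norm_single]; norm_num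
    rw [hn] at h
    have hsum : (∑ k, ((EuclideanSpace.single i (1:ℝ)) k - (0 : EuclideanSpace ℝ (Fin N)) k)
        * (pgrad (f k) k (EuclideanSpace.single i (1:ℝ)) - pgrad (f k) k 0))
        = pgrad (f i) i (EuclideanSpace.single i (1:ℝ)) - pgrad (f i) i 0 := by
      rw [Finset.sum_eq_single_of_mem i (Finset.mem_univ i)]
      · simp [EuclideanSpace.single_apply]
      · intro k _ hk
        simp [EuclideanSpace.single_apply, hk]
    rw [hsum] at h
    have h2 := hf_lip i (EuclideanSpace.single i (1:ℝ)) 0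
    rw [hn] at h2
    have h3 : pgrad (f i) i (EuclideanSpace.single i (1:ℝ)) - pgrad (f i) i 0
        ≤ |pgrad (f i) i (EuclideanSpace.single i (1:ℝ)) - pgrad (f i) i 0| := le_abs_self _
    nlinarith
  obtain ⟨lam, hlam, hQ⟩ := exists_uniform_pd N hN a ha_nonneg ha_symm ha_conn
  -- constants
  set L := Finset.univ.sup' Finset.univ_nonempty l with hLdef
  have hL : ∀ i, l i ≤ L := fun i => Finset.le_sup' l (Finset.mem_univ i)
  have hLpos : 0 < L := lt_of_lt_of_le hm ((hlm i0).trans (hL i0))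
  have hlnn : ∀ i, 0 ≤ l i := fun i => le_of_lt (lt_of_lt_of_le hm (hlm i))
  clear_value L
  set d := Finset.univ.inf' Finset.univ_nonempty
    (fun i => Finset.univ.inf' Finset.univ_nonempty (δbar i)) with hddef
  have hd : ∀ i j, d ≤ δbar i j := by
    intro i j
    refine le_trans (Finset.inf'_le _ (Finset.mem_univ i)) ?_
    exact Finset.inf'_le _ (Finset.mem_univ j)
  have hdpos : 0 < d := by
    rw [hddef, Finset.lt_inf'_iff]
    intro i _
    rw [Finset.lt_inf'_iff]
    exact fun j _ => hδbar i j
  clear_value d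
  set D := Finset.univ.sup' Finset.univ_nonempty
    (fun i => Finset.univ.sup' Finset.univ_nonempty (δbar i)) with hDdef
  have hD : ∀ i j, δbar i j ≤ D := by
    intro i j
    refine le_trans ?_ (Finset.le_sup' _ (Finset.mem_univ i))
    exact Finset.le_sup' _ (Finset.mem_univ j)
  have hDpos : 0 < D := lt_of_lt_of_le (hδbar i0 i0) (hD i0 i0)
  clear_value D
  set K : ℝ := N * L + N ^ 2 * L / d with hKdef
  set K' : ℝ := (N : ℝ) ^ 2 * L / d with hK'def
  have hKpos : 0 < K := by
    have : (0:ℝ) < N := by exact_mod_cast hNpos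
    positivity
  have hK'pos : 0 < K' := by
    have : (0:ℝ) < N := by exact_mod_cast hNpos
    positivity
  clear_value K K'
  set η : ℝ := m * d / (2 * (d + 1)) with hηdef
  have hηpos : 0 < η := by positivity
  have hη2 : η ≤ m / 2 := by
    rw [hηdef, div_le_div_iff₀ (by positivity) (by norm_num)]
    nlinarith
  have hηd : η / d ≤ m / 2 := by
    rw [hηdef, div_div]
    rw [div_le_div_iff₀ (by positivity) (by norm_num)]
    nlinarith [mul_pos (mul_pos hm hdpos) hdpos]
  clear_value η
  refine ⟨(K' + K ^ 2 / (2 * m) + m + 1) / lam, by positivity, ?_⟩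
  intro δ hδ y z hy hz
  have hδpos : 0 < δ := lt_trans (by positivity) hδ
  have hδlam : K' + K ^ 2 / (2 * m) + m + 1 < δ * lam := by
    rw [div_lt_iff₀ hlam] at hδ
    exact hδ
  -- basic nonnegativity
  have hA0 : ∀ t : ℝ, 0 ≤ ∑ i, (y i t - xstar i) ^ 2 :=
    fun t => Finset.sum_nonneg fun i _ => sq_nonneg _
  have hB0 : ∀ t : ℝ, 0 ≤ ∑ i, ∑ j, (z i j t - y j t) ^ 2 :=
    fun t => Finset.sum_nonneg fun i _ => Finset.sum_nonneg fun j _ => sq_nonneg _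
  -- gradient bounds via norms
  have hlipzy : ∀ (i : Fin N) (t : ℝ),
      |pgrad (f i) i (WithLp.toLp 2 (fun j => z i j t)) - pgrad (f i) i (WithLp.toLp 2 (fun j => y j t))|
      ≤ l i * Real.sqrt (∑ i', ∑ j, (z i' j t - y j t) ^ 2) := by
    intro i t
    refine le_trans (hf_lip i (WithLp.toLp 2 (fun j => z i j t)) (WithLp.toLp 2 (fun j => y j t))) ?_
    refine mul_le_mul_of_nonneg_left ?_ (hlnn i)
    rw [hnorm]
    apply Real.sqrt_le_sqrt
    exact Finset.single_le_sum (f := fun i' => ∑ j, (z i' j t - y j t) ^ 2)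
      (fun i' _ => Finset.sum_nonneg fun j _ => sq_nonneg _) (Finset.mem_univ i)
  have hu_bound : ∀ (i : Fin N) (t : ℝ), |pgrad (f i) i (WithLp.toLp 2 (fun j => z i j t))|
      ≤ l i * (Real.sqrt (∑ i', ∑ j, (z i' j t - y j t) ^ 2)
        + Real.sqrt (∑ i', (y i' t - xstar i') ^ 2)) := by
    intro i t
    have h := hf_lip i (WithLp.toLp 2 (fun j => z i j t)) xstar
    rw [hgrad0 i, sub_zero] at h
    refine le_trans h (mul_le_mul_of_nonneg_left ?_ (hlnn i))
    have key : ∀ (p q r : EuclideanSpace ℝ (Fin N)), ‖p - r‖ ≤ ‖p - q‖ + ‖q - r‖ := by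
      intro p q r
      have := norm_add_le (p - q) (q - r)
      rwa [sub_add_sub_cancel] at this
    refine le_trans (key _ (WithLp.toLp 2 (fun j => y j t)) _) ?_
    refine add_le_add ?_ (le_of_eq ?_)
    · rw [hnorm]
      apply Real.sqrt_le_sqrt
      exact Finset.single_le_sum (f := fun i' => ∑ j, (z i' j t - y j t) ^ 2)
        (fun i' _ => Finset.sum_nonneg fun j _ => sq_nonneg _) (Finset.mem_univ i)
    · rw [hnorm]
  have hmonoyt : ∀ t : ℝ, m * (∑ i, (y i t - xstar i) ^ 2)
      ≤ ∑ i, (y i t - xstar i) * pgrad (f i) i (WithLp.toLp 2 (fun j => y j t)) := by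
    intro t
    have h := hmono (WithLp.toLp 2 (fun j => y j t)) xstar
    rw [hnorm] at h
    simp only [WithLp.ofLp_toLp] at h
    rw [Real.sq_sqrt (hA0 t)] at h
    refine le_trans h (le_of_eq ?_)
    refine Finset.sum_congr rfl fun i _ => ?_
    rw [hgrad0 i, sub_zero]
  -- the Lyapunov function and its derivative
  set V : ℝ → ℝ := fun t => (∑ i, (y i t - xstar i) ^ 2) / 2
      + (∑ i, ∑ j, (z i j t - y j t) ^ 2 / δbar i j) / 2 with hVdef
  set Vd : ℝ → ℝ := fun t =>
    (∑ i, 2 * (y i t - xstar i) ^ 1 * (-(pgrad (f i) i (WithLp.toLp 2 (fun j => z i j t))))) / 2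
    + (∑ i, ∑ j, (2 * (z i j t - y j t) ^ 1 *
        ((-(δ * δbar i j) * ((∑ k, a i k * (z i j t - z k j t)) + a i j * (z i j t - y j t)))
          - (-(pgrad (f j) j (WithLp.toLp 2 (fun k => z j k t)))))) / δbar i j) / 2 with hVDdef
  clear_value V Vd
  have hVnn : ∀ t : ℝ, 0 ≤ V t := by
    intro t
    rw [hVdef]
    have h1 : (0:ℝ) ≤ (∑ i, (y i t - xstar i) ^ 2) / 2 := by positivity
    have h2 : (0:ℝ) ≤ (∑ i, ∑ j, (z i j t - y j t) ^ 2 / δbar i j) / 2 := by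
      refine div_nonneg (Finset.sum_nonneg fun i _ => Finset.sum_nonneg fun j _ => ?_) (by norm_num)
      exact div_nonneg (sq_nonneg _) (le_of_lt (hδbar i j))
    exact add_nonneg h1 h2
  have hVderiv : ∀ t : ℝ, 0 ≤ t → HasDerivAt V (Vd t) t := by
    intro t ht
    rw [hVdef, hVDdef]
    refine HasDerivAt.add ?_ ?_
    · refine HasDerivAt.div_const ?_ 2
      refine HasDerivAt.fun_sum fun i _ => ?_
      exact ((hy i t ht).sub_const (xstar i)).pow 2
    · refine HasDerivAt.div_const ?_ 2
      refine HasDerivAt.fun_sum fun i _ => ?_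
      refine HasDerivAt.fun_sum fun j _ => ?_
      exact (((hz i j t ht).sub (hy j t ht)).pow 2).div_const (δbar i j)
  -- key differential inequality
  have hkey : ∀ t : ℝ, 0 ≤ t → Vd t ≤ -(2 * η) * V t := by
    intro t ht
    set SA := Real.sqrt (∑ i, (y i t - xstar i) ^ 2) with hSAdef
    set SB := Real.sqrt (∑ i, ∑ j, (z i j t - y j t) ^ 2) with hSBdef
    clear_value SA SB
    have hSA0 : 0 ≤ SA := by rw [hSAdef]; exact Real.sqrt_nonneg _
    have hSB0 : 0 ≤ SB := by rw [hSBdef]; exact Real.sqrt_nonneg _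
    have hSA2 : SA ^ 2 = ∑ i, (y i t - xstar i) ^ 2 := by
      rw [hSAdef]; exact Real.sq_sqrt (hA0 t)
    have hSB2 : SB ^ 2 = ∑ i, ∑ j, (z i j t - y j t) ^ 2 := by
      rw [hSBdef]; exact Real.sq_sqrt (hB0 t)
    have hYle : ∀ i, |y i t - xstar i| ≤ SA := by
      intro i
      rw [hSAdef, ← Real.sqrt_sq_eq_abs]
      exact Real.sqrt_le_sqrt (Finset.single_le_sum (f := fun i' => (y i' t - xstar i') ^ 2)
        (fun _ _ => sq_nonneg _) (Finset.mem_univ i))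
    have hEle : ∀ i j, |z i j t - y j t| ≤ SB := by
      intro i j
      rw [hSBdef, ← Real.sqrt_sq_eq_abs]
      refine Real.sqrt_le_sqrt ?_
      refine le_trans (Finset.single_le_sum (f := fun j' => (z i j' t - y j' t) ^ 2)
        (fun _ _ => sq_nonneg _) (Finset.mem_univ j)) ?_
      exact Finset.single_le_sum (f := fun i' => ∑ j', (z i' j' t - y j' t) ^ 2)
        (fun i' _ => Finset.sum_nonneg fun _ _ => sq_nonneg _) (Finset.mem_univ i)
    have huL : ∀ j : Fin N, |pgrad (f j) j (WithLp.toLp 2 (fun k => z j k t))| ≤ L * (SB + SA) := by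
      intro j
      have hb := hu_bound j t
      rw [← hSBdef, ← hSAdef] at hb
      refine le_trans hb (mul_le_mul_of_nonneg_right (hL j) (add_nonneg hSB0 hSA0))
    have hT1 : (∑ i, 2 * (y i t - xstar i) ^ 1 * (-(pgrad (f i) i (WithLp.toLp 2 (fun j => z i j t))))) / 2
        ≤ -(m * SA ^ 2) + ↑N * (L * (SA * SB)) := by
      have e1 : (∑ i, 2 * (y i t - xstar i) ^ 1 * (-(pgrad (f i) i (WithLp.toLp 2 (fun j => z i j t))))) / 2
          = -(∑ i, (y i t - xstar i) * pgrad (f i) i (WithLp.toLp 2 (fun j => y j t)))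
            - ∑ i, (y i t - xstar i) *
                (pgrad (f i) i (WithLp.toLp 2 (fun j => z i j t)) - pgrad (f i) i (WithLp.toLp 2 (fun j => y j t))) := by
        rw [Finset.sum_div, ← Finset.sum_neg_distrib, ← Finset.sum_sub_distrib]
        exact Finset.sum_congr rfl fun i _ => by ring
      rw [e1]
      have h1 : -(∑ i, (y i t - xstar i) * pgrad (f i) i (WithLp.toLp 2 (fun j => y j t))) ≤ -(m * SA ^ 2) := by
        have h := hmonoyt t
        rw [← hSA2] at h
        linarith
      have h2 : -(∑ i, (y i t - xstar i) *
          (pgrad (f i) i (WithLp.toLp 2 (fun j => z i j t)) - pgrad (f i) i (WithLp.toLp 2 (fun j => y j t))))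
          ≤ ↑N * (L * (SA * SB)) := by
        rw [← Finset.sum_neg_distrib]
        refine le_trans (Finset.sum_le_sum (g := fun _ : Fin N => L * (SA * SB)) (fun i _ => ?_)) ?_
        · show -((y i t - xstar i) *
              (pgrad (f i) i (WithLp.toLp 2 (fun j => z i j t)) - pgrad (f i) i (WithLp.toLp 2 (fun j => y j t))))
            ≤ L * (SA * SB)
          have hb := hlipzy i t
          rw [← hSBdef] at hb
          have habs : |(y i t - xstar i) *
              (pgrad (f i) i (WithLp.toLp 2 (fun j => z i j t)) - pgrad (f i) i (WithLp.toLp 2 (fun j => y j t)))|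
              ≤ SA * (l i * SB) :=
            (abs_mul _ _).le.trans (mul_le_mul (hYle i) hb (abs_nonneg _) hSA0)
          have hneg := le_abs_self (-((y i t - xstar i) *
              (pgrad (f i) i (WithLp.toLp 2 (fun j => z i j t)) - pgrad (f i) i (WithLp.toLp 2 (fun j => y j t)))))
          rw [abs_neg] at hneg
          have hls : SA * (l i * SB) ≤ L * (SA * SB) := by
            nlinarith [mul_nonneg hSA0 hSB0, hL i]
          linarith
        · rw [Finset.sum_const, Finset.card_univ, Fintype.card_fin, nsmul_eq_mul]
      linarith
    have hT2 : (∑ i, ∑ j, (2 * (z i j t - y j t) ^ 1 *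
        ((-(δ * δbar i j) * ((∑ k, a i k * (z i j t - z k j t)) + a i j * (z i j t - y j t)))
          - (-(pgrad (f j) j (WithLp.toLp 2 (fun k => z j k t)))))) / δbar i j) / 2
        ≤ -(δ * (lam * SB ^ 2)) + (↑N)^2 * (SB * (L * (SB + SA)) / d) := by
      have inner : ∀ i j : Fin N, (2 * (z i j t - y j t) ^ 1 *
          ((-(δ * δbar i j) * ((∑ k, a i k * (z i j t - z k j t)) + a i j * (z i j t - y j t)))
            - (-(pgrad (f j) j (WithLp.toLp 2 (fun k => z j k t)))))) / δbar i j / 2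
          = -(δ * ((z i j t - y j t) *
              ((∑ k, a i k * ((z i j t - y j t) - (z k j t - y j t))) + a i j * (z i j t - y j t))))
            + ((z i j t - y j t) * pgrad (f j) j (WithLp.toLp 2 (fun k => z j k t))) / δbar i j := by
        intro i j
        have hS : (∑ k, a i k * (z i j t - z k j t))
            = ∑ k, a i k * ((z i j t - y j t) - (z k j t - y j t)) :=
          Finset.sum_congr rfl fun k _ => by ring
        rw [hS]
        have hne : δbar i j ≠ 0 := ne_of_gt (hδbar i j)
        field_simp
        ring
      have split : (∑ i, ∑ j, (2 * (z i j t - y j t) ^ 1 *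
          ((-(δ * δbar i j) * ((∑ k, a i k * (z i j t - z k j t)) + a i j * (z i j t - y j t)))
            - (-(pgrad (f j) j (WithLp.toLp 2 (fun k => z j k t)))))) / δbar i j) / 2
          = (∑ i, ∑ j, -(δ * ((z i j t - y j t) *
              ((∑ k, a i k * ((z i j t - y j t) - (z k j t - y j t))) + a i j * (z i j t - y j t)))))
            + ∑ i, ∑ j, ((z i j t - y j t) * pgrad (f j) j (WithLp.toLp 2 (fun k => z j k t))) / δbar i j := by
        simp only [Finset.sum_div]
        rw [Finset.sum_congr rfl (fun i (_ : i ∈ Finset.univ) =>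
          Finset.sum_congr rfl (fun j (_ : j ∈ Finset.univ) => inner i j))]
        rw [Finset.sum_congr rfl (fun i (_ : i ∈ Finset.univ) =>
          Finset.sum_add_distrib)]
        rw [Finset.sum_add_distrib]
      rw [split]
      have keyneg : ∀ (g : Fin N → ℝ), (∑ x, -(δ * g x)) = -(δ * ∑ x, g x) := by
        intro g
        rw [Finset.mul_sum, Finset.sum_neg_distrib]
      have hQpart : (∑ i, ∑ j, -(δ * ((z i j t - y j t) *
          ((∑ k, a i k * ((z i j t - y j t) - (z k j t - y j t))) + a i j * (z i j t - y j t)))))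
          ≤ -(δ * (lam * SB ^ 2)) := by
        have e3 : (∑ i, ∑ j, -(δ * ((z i j t - y j t) *
            ((∑ k, a i k * ((z i j t - y j t) - (z k j t - y j t))) + a i j * (z i j t - y j t)))))
            = -(δ * ∑ j, ∑ i, ((z i j t - y j t) *
              ((∑ k, a i k * ((z i j t - y j t) - (z k j t - y j t))) + a i j * (z i j t - y j t)))) := by
          rw [Finset.sum_comm]
          rw [Finset.sum_congr rfl (fun j (_ : j ∈ Finset.univ) => keyneg _)]
          exact keyneg _
        rw [e3]
        refine neg_le_neg ?_
        refine mul_le_mul_of_nonneg_left ?_ (le_of_lt hδpos)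
        have hQj : ∀ j : Fin N, lam * (∑ i, (z i j t - y j t) ^ 2)
            ≤ ∑ i, ((z i j t - y j t) *
              ((∑ k, a i k * ((z i j t - y j t) - (z k j t - y j t))) + a i j * (z i j t - y j t))) := by
          intro j
          simpa using hQ j (fun i' => z i' j t - y j t)
        have hsum := Finset.sum_le_sum (fun j (_ : j ∈ Finset.univ) => hQj j)
        rw [← Finset.mul_sum] at hsum
        have hBswap : (∑ j, ∑ i, (z i j t - y j t) ^ 2) = SB ^ 2 := by
          rw [hSB2, Finset.sum_comm]
        rw [hBswap] at hsum
        exact hsum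
      have hupart : (∑ i, ∑ j, ((z i j t - y j t) * pgrad (f j) j (WithLp.toLp 2 (fun k => z j k t))) / δbar i j)
          ≤ (↑N)^2 * (SB * (L * (SB + SA)) / d) := by
        refine le_trans (Finset.sum_le_sum (g := fun _ : Fin N => ∑ _j : Fin N, SB * (L * (SB + SA)) / d)
          (fun i (_ : i ∈ Finset.univ) =>
          Finset.sum_le_sum (g := fun _ : Fin N => SB * (L * (SB + SA)) / d)
            (fun j (_ : j ∈ Finset.univ) => ?_))) ?_
        · show ((z i j t - y j t) * pgrad (f j) j (WithLp.toLp 2 (fun k => z j k t))) / δbar i j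
            ≤ SB * (L * (SB + SA)) / d
          have h1 : (z i j t - y j t) * pgrad (f j) j (WithLp.toLp 2 (fun k => z j k t))
              ≤ |(z i j t - y j t) * pgrad (f j) j (WithLp.toLp 2 (fun k => z j k t))| := le_abs_self _
          have h2 : |(z i j t - y j t) * pgrad (f j) j (WithLp.toLp 2 (fun k => z j k t))|
              ≤ SB * (L * (SB + SA)) := by
            rw [abs_mul]
            exact mul_le_mul (hEle i j) (huL j) (abs_nonneg _) hSB0
          calc ((z i j t - y j t) * pgrad (f j) j (WithLp.toLp 2 (fun k => z j k t))) / δbar i j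
              ≤ |(z i j t - y j t) * pgrad (f j) j (WithLp.toLp 2 (fun k => z j k t))| / δbar i j :=
                (div_le_div_iff_of_pos_right (hδbar i j)).2 h1
            _ ≤ |(z i j t - y j t) * pgrad (f j) j (WithLp.toLp 2 (fun k => z j k t))| / d :=
                div_le_div_of_nonneg_left (abs_nonneg _) hdpos (hd i j)
            _ ≤ SB * (L * (SB + SA)) / d := (div_le_div_iff_of_pos_right hdpos).2 h2
        · rw [Finset.sum_const, Finset.sum_const, Finset.card_univ, Fintype.card_fin,
            nsmul_eq_mul, nsmul_eq_mul]
          ring_nf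
          nlinarith [le_refl (0:ℝ)]
      exact add_le_add hQpart hupart
    have hVub : V t ≤ SA ^ 2 / 2 + SB ^ 2 / (2 * d) := by
      have hVt : V t = (∑ i, (y i t - xstar i) ^ 2) / 2
          + (∑ i, ∑ j, (z i j t - y j t) ^ 2 / δbar i j) / 2 := by rw [hVdef]
      have h1 : (∑ i, ∑ j, (z i j t - y j t) ^ 2 / δbar i j)
          ≤ (∑ i, ∑ j, (z i j t - y j t) ^ 2) / d := by
        rw [Finset.sum_div]
        refine Finset.sum_le_sum fun i _ => ?_
        rw [Finset.sum_div]
        refine Finset.sum_le_sum fun j _ => ?_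
        exact div_le_div_of_nonneg_left (sq_nonneg _) hdpos (hd i j)
      rw [← hSB2] at h1
      rw [hVt, ← hSA2]
      calc SA ^ 2 / 2 + (∑ i, ∑ j, (z i j t - y j t) ^ 2 / δbar i j) / 2
          ≤ SA ^ 2 / 2 + (SB ^ 2 / d) / 2 := by linarith
        _ = SA ^ 2 / 2 + SB ^ 2 / (2 * d) := by ring
    have hG1 : (m/2)*SA^2 - K*(SA*SB) + (K^2/(2*m))*SB^2 = (m*SA - K*SB)^2/(2*m) := by
      field_simp
      ring
    have hG2 : (0:ℝ) ≤ (m*SA - K*SB)^2/(2*m) := by positivity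
    have hbound_eq : ↑N * (L*(SA*SB)) + (↑N)^2 * (SB*(L*(SB+SA))/d) = K*(SA*SB) + K'*SB^2 := by
      rw [hKdef, hK'def]
      field_simp
      ring
    have hVt2 : 2*η*(V t) ≤ η*SA^2 + (η/d)*SB^2 := by
      have h := mul_le_mul_of_nonneg_left hVub (le_of_lt (by positivity : (0:ℝ) < 2*η))
      calc 2*η*(V t) ≤ 2*η*(SA^2/2 + SB^2/(2*d)) := h
        _ = η*SA^2 + (η/d)*SB^2 := by field_simp
    have P1 : η*SA^2 ≤ (m/2)*SA^2 := mul_le_mul_of_nonneg_right hη2 (sq_nonneg SA)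
    have P2 : (η/d)*SB^2 ≤ (m/2)*SB^2 := mul_le_mul_of_nonneg_right hηd (sq_nonneg SB)
    have P3 : (K' + K^2/(2*m) + m + 1)*SB^2 ≤ δ*lam*SB^2 :=
      mul_le_mul_of_nonneg_right (le_of_lt hδlam) (sq_nonneg SB)
    calc Vd t = (∑ i, 2 * (y i t - xstar i) ^ 1 * (-(pgrad (f i) i (WithLp.toLp 2 (fun j => z i j t))))) / 2
        + (∑ i, ∑ j, (2 * (z i j t - y j t) ^ 1 *
          ((-(δ * δbar i j) * ((∑ k, a i k * (z i j t - z k j t)) + a i j * (z i j t - y j t)))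
            - (-(pgrad (f j) j (WithLp.toLp 2 (fun k => z j k t)))))) / δbar i j) / 2 := by rw [hVDdef]
      _ ≤ (-(m * SA ^ 2) + ↑N * (L * (SA * SB)))
          + (-(δ * (lam * SB ^ 2)) + (↑N)^2 * (SB * (L * (SB + SA)) / d)) := add_le_add hT1 hT2
      _ ≤ -(2 * η) * V t := by
          linarith [hbound_eq, hVt2, P1, P2, P3, sq_nonneg SB, hG1, hG2,
            mul_nonneg (le_of_lt hm) (sq_nonneg SB)]
  -- Gronwall
  set Wf : ℝ → ℝ := fun s => V s * Real.exp (2*η*s) with hWdef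
  clear_value Wf
  have hWderiv : ∀ s : ℝ, 0 ≤ s → HasDerivAt Wf
      (Vd s * Real.exp (2*η*s) + V s * (Real.exp (2*η*s) * (2*η))) s := by
    intro s hs
    rw [hWdef]
    have h0 : HasDerivAt (fun s' : ℝ => 2*η*s') (2*η) s := by
      simpa using (hasDerivAt_id s).const_mul (2*η)
    exact (hVderiv s hs).mul h0.exp
  have hWanti : AntitoneOn Wf (Set.Ici 0) := by
    refine antitoneOn_of_deriv_nonpos (convex_Ici 0) ?_ ?_ ?_
    · intro x hx
      exact ((hWderiv x hx).continuousAt).continuousWithinAt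
    · intro x hx
      rw [interior_Ici] at hx
      exact ((hWderiv x (le_of_lt hx)).differentiableAt).differentiableWithinAt
    · intro x hx
      rw [interior_Ici] at hx
      rw [(hWderiv x (le_of_lt hx)).deriv]
      have hk := hkey x (le_of_lt hx)
      have he := Real.exp_pos (2*η*x)
      nlinarith [mul_le_mul_of_nonneg_right hk he.le]
  have hgron : ∀ t : ℝ, 0 ≤ t → V t ≤ V 0 * Real.exp (-(2*η)*t) := by
    intro t ht
    have h := hWanti Set.self_mem_Ici ht ht
    have hW0 : Wf 0 = V 0 := by rw [hWdef]; simp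
    have hWt : Wf t = V t * Real.exp (2*η*t) := by rw [hWdef]
    rw [hW0, hWt] at h
    have he := Real.exp_pos (2*η*t)
    have heq : V 0 * Real.exp (-(2*η)*t) = V 0 / Real.exp (2*η*t) := by
      rw [show -(2*η)*t = -(2*η*t) by ring, Real.exp_neg]
      ring
    rw [heq, le_div_iff₀ he]
    exact h
  have hAle : ∀ t : ℝ, 0 ≤ t → (∑ i, (y i t - xstar i)^2) ≤ 2 * (V 0 * Real.exp (-(2*η)*t)) := by
    intro t ht
    have h := hgron t ht
    have hVt : V t = (∑ i, (y i t - xstar i) ^ 2) / 2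
        + (∑ i, ∑ j, (z i j t - y j t) ^ 2 / δbar i j) / 2 := by rw [hVdef]
    have hnn : (0:ℝ) ≤ (∑ i, ∑ j, (z i j t - y j t) ^ 2 / δbar i j) / 2 := by
      refine div_nonneg (Finset.sum_nonneg fun i _ => Finset.sum_nonneg fun j _ => ?_) (by norm_num)
      exact div_nonneg (sq_nonneg _) (le_of_lt (hδbar i j))
    linarith
  have hBle : ∀ t : ℝ, 0 ≤ t →
      (∑ i, ∑ j, (z i j t - y j t)^2) ≤ 2 * D * (V 0 * Real.exp (-(2*η)*t)) := by
    intro t ht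
    have h := hgron t ht
    have hVt : V t = (∑ i, (y i t - xstar i) ^ 2) / 2
        + (∑ i, ∑ j, (z i j t - y j t) ^ 2 / δbar i j) / 2 := by rw [hVdef]
    have hin : (∑ i, ∑ j, (z i j t - y j t)^2) / D ≤ ∑ i, ∑ j, (z i j t - y j t)^2/δbar i j := by
      rw [Finset.sum_div]
      refine Finset.sum_le_sum fun i _ => ?_
      rw [Finset.sum_div]
      refine Finset.sum_le_sum fun j _ => ?_
      exact div_le_div_of_nonneg_left (sq_nonneg _) (hδbar i j) (hD i j)
    have hA := hA0 t
    have h2 : (∑ i, ∑ j, (z i j t - y j t)^2) / (2*D) ≤ V t := by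
      rw [hVt]
      have heq2 : (∑ i, ∑ j, (z i j t - y j t)^2) / (2*D)
          = ((∑ i, ∑ j, (z i j t - y j t)^2) / D) / 2 := by ring
      rw [heq2]
      linarith
    have h3 := mul_le_mul_of_nonneg_left (h2.trans h) (by positivity : (0:ℝ) ≤ 2*D)
    calc (∑ i, ∑ j, (z i j t - y j t)^2)
        = 2*D * ((∑ i, ∑ j, (z i j t - y j t)^2) / (2*D)) := by field_simp
      _ ≤ 2*D*(V 0 * Real.exp (-(2*η)*t)) := h3
  have hV0nn : (0:ℝ) ≤ V 0 := hVnn 0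
  have hexple : ∀ t : ℝ, 0 ≤ t → Real.exp (-(2*η)*t) ≤ 1 := by
    intro t ht
    rw [Real.exp_le_one_iff]
    nlinarith [hηpos]
  have hdecay : ∀ (i : Fin N) (t : ℝ), 0 ≤ t → |pgrad (f i) i (WithLp.toLp 2 (fun j => z i j t))|
      ≤ l i * (Real.sqrt (2 * V 0) + Real.sqrt (2 * D * V 0) + 1) * Real.exp (-η*t) := by
    intro i t ht
    have hb := hu_bound i t
    have e1 : Real.sqrt (∑ i', ∑ j, (z i' j t - y j t)^2)
        ≤ Real.sqrt (2*D*(V 0)) * Real.exp (-η*t) := by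
      refine le_trans (Real.sqrt_le_sqrt (hBle t ht)) ?_
      rw [show (2*D*(V 0 * Real.exp (-(2*η)*t))) = (2*D*(V 0)) * Real.exp (-(2*η)*t) by ring]
      rw [Real.sqrt_mul (by positivity)]
      refine mul_le_mul_of_nonneg_left (le_of_eq ?_) (Real.sqrt_nonneg _)
      rw [← Real.exp_half]
      exact congrArg Real.exp (by ring)
    have e2 : Real.sqrt (∑ i', (y i' t - xstar i')^2)
        ≤ Real.sqrt (2*(V 0)) * Real.exp (-η*t) := by
      refine le_trans (Real.sqrt_le_sqrt (hAle t ht)) ?_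
      rw [show (2*(V 0 * Real.exp (-(2*η)*t))) = (2*(V 0)) * Real.exp (-(2*η)*t) by ring]
      rw [Real.sqrt_mul (by positivity)]
      refine mul_le_mul_of_nonneg_left (le_of_eq ?_) (Real.sqrt_nonneg _)
      rw [← Real.exp_half]
      exact congrArg Real.exp (by ring)
    have hee := (Real.exp_pos (-η*t)).le
    have hsum : Real.sqrt (∑ i', ∑ j, (z i' j t - y j t)^2)
        + Real.sqrt (∑ i', (y i' t - xstar i')^2)
        ≤ (Real.sqrt (2 * V 0) + Real.sqrt (2 * D * V 0) + 1) * Real.exp (-η*t) := by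
      nlinarith [e1, e2, hee]
    calc |pgrad (f i) i (WithLp.toLp 2 (fun j => z i j t))|
        ≤ l i * (Real.sqrt (∑ i', ∑ j, (z i' j t - y j t)^2)
          + Real.sqrt (∑ i', (y i' t - xstar i')^2)) := hb
      _ ≤ l i * ((Real.sqrt (2 * V 0) + Real.sqrt (2 * D * V 0) + 1) * Real.exp (-η*t)) :=
          mul_le_mul_of_nonneg_left hsum (hlnn i)
      _ = l i * (Real.sqrt (2 * V 0) + Real.sqrt (2 * D * V 0) + 1) * Real.exp (-η*t) := by ring
  refine ⟨⟨Real.sqrt (2 * V 0) + Real.sqrt (2 * D * V 0) + ‖xstar‖, ?_⟩, ?_, ?_⟩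
  · -- (i) boundedness
    intro i j t ht
    have hxb : ∀ i' : Fin N, |xstar i'| ≤ ‖xstar‖ := by
      intro i'
      have h0 := hnorm xstar 0
      rw [sub_zero] at h0
      have h0' : ‖xstar‖ = Real.sqrt (∑ i'', (xstar i'') ^ 2) := by
        rw [h0]
        congr 1
        refine Finset.sum_congr rfl fun i'' _ => ?_
        norm_num
      rw [h0', ← Real.sqrt_sq_eq_abs]
      exact Real.sqrt_le_sqrt (Finset.single_le_sum (f := fun i'' => (xstar i'') ^ 2)
        (fun _ _ => sq_nonneg _) (Finset.mem_univ i'))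
    have hyb : ∀ i' : Fin N, |y i' t - xstar i'| ≤ Real.sqrt (2 * V 0) := by
      intro i'
      rw [← Real.sqrt_sq_eq_abs]
      refine Real.sqrt_le_sqrt ?_
      have h1 : (y i' t - xstar i')^2 ≤ ∑ i'', (y i'' t - xstar i'')^2 :=
        Finset.single_le_sum (f := fun i'' => (y i'' t - xstar i'')^2)
          (fun _ _ => sq_nonneg _) (Finset.mem_univ i')
      have h2 := hAle t ht
      have h3 := hexple t ht
      nlinarith [hV0nn]
    have hzb : |z i j t - y j t| ≤ Real.sqrt (2 * D * V 0) := by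
      rw [← Real.sqrt_sq_eq_abs]
      refine Real.sqrt_le_sqrt ?_
      have h1 : (z i j t - y j t)^2 ≤ ∑ i', ∑ j', (z i' j' t - y j' t)^2 := by
        refine le_trans (Finset.single_le_sum (f := fun j' => (z i j' t - y j' t) ^ 2)
          (fun _ _ => sq_nonneg _) (Finset.mem_univ j)) ?_
        exact Finset.single_le_sum (f := fun i' => ∑ j', (z i' j' t - y j' t) ^ 2)
          (fun i' _ => Finset.sum_nonneg fun _ _ => sq_nonneg _) (Finset.mem_univ i)
      have h2 := hBle t ht
      have h3 := hexple t ht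
      nlinarith [hV0nn, hDpos, mul_le_mul_of_nonneg_left h3 (mul_nonneg hDpos.le hV0nn)]
    have hyabs : ∀ i' : Fin N, |y i' t| ≤ Real.sqrt (2 * V 0) + ‖xstar‖ := by
      intro i'
      calc |y i' t| = |(y i' t - xstar i') + xstar i'| := by ring_nf
        _ ≤ |y i' t - xstar i'| + |xstar i'| := abs_add_le _ _
        _ ≤ Real.sqrt (2 * V 0) + ‖xstar‖ := add_le_add (hyb i') (hxb i')
    constructor
    · have := hyabs i
      have hs := Real.sqrt_nonneg (2 * D * V 0)
      linarith
    · calc |z i j t| = |(z i j t - y j t) + y j t| := by ring_nf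
        _ ≤ |z i j t - y j t| + |y j t| := abs_add_le _ _
        _ ≤ Real.sqrt (2 * D * V 0) + (Real.sqrt (2 * V 0) + ‖xstar‖) :=
            add_le_add hzb (hyabs j)
        _ = Real.sqrt (2 * V 0) + Real.sqrt (2 * D * V 0) + ‖xstar‖ := by ring
  · -- (ii) exponential decay
    refine ⟨Real.sqrt (2 * V 0) + Real.sqrt (2 * D * V 0) + 1, η, by positivity, hηpos, ?_⟩
    intro i t ht
    rw [abs_neg]
    exact hdecay i t ht
  · -- (iii) square integrability
    intro i
    set η₁ : ℝ := Real.sqrt (2 * V 0) + Real.sqrt (2 * D * V 0) + 1 with hη₁def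
    have hη₁pos : 0 < η₁ := by rw [hη₁def]; positivity
    set C2 : ℝ := (l i * η₁)^2 with hC2def
    have hC2nn : 0 ≤ C2 := by rw [hC2def]; positivity
    clear_value η₁ C2
    have hF : ∀ x ∈ Set.Ici (0:ℝ), HasDerivAt (fun s => -(C2/(2*η)) * Real.exp (-(2*η)*s))
        (C2 * Real.exp (-(2*η)*x)) x := by
      intro x _
      have h0 : HasDerivAt (fun s : ℝ => -(2*η)*s) (-(2*η)) x := by
        simpa using (hasDerivAt_id x).const_mul (-(2*η))
      have h1 := (h0.exp).const_mul (-(C2/(2*η)))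
      refine h1.congr_deriv ?_
      have h2η : (2*η) / (2*η) = 1 := div_self (by positivity)
      linear_combination (C2 * Real.exp (-(2*η)*x)) * h2η
    have htend : Tendsto (fun s => -(C2/(2*η)) * Real.exp (-(2*η)*s)) atTop (nhds 0) := by
      have h2 : Tendsto (fun s : ℝ => (2*η)*s) atTop atTop :=
        Tendsto.const_mul_atTop (by positivity) tendsto_id
      have h3 : Tendsto (fun s : ℝ => Real.exp (-(2*η)*s)) atTop (nhds 0) := by
        have := Real.tendsto_exp_neg_atTop_nhds_zero.comp h2
        simpa [Function.comp_def, neg_mul] using this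
      have h4 := h3.const_mul (-(C2/(2*η)))
      simpa using h4
    have hint_dom : MeasureTheory.IntegrableOn (fun s => C2 * Real.exp (-(2*η)*s)) (Set.Ioi 0) :=
      integrableOn_Ioi_deriv_of_nonneg' hF (fun x _ => by positivity) htend
    have hint_val : (∫ s in Set.Ioi (0:ℝ), C2 * Real.exp (-(2*η)*s)) = C2/(2*η) := by
      rw [integral_Ioi_of_hasDerivAt_of_tendsto' hF hint_dom htend]
      simp [Real.exp_zero]
    have hmeas : ContinuousOn (fun s => (-(pgrad (f i) i (WithLp.toLp 2 (fun j => z i j s))))^2) (Set.Ioi 0) := by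
      have hpg : Continuous (fun x : EuclideanSpace ℝ (Fin N) => pgrad (f i) i x) :=
        ((hf_smooth i).continuous_fderiv (by simp)).clm_apply continuous_const
      have hzcont : ContinuousOn
          (fun s : ℝ => ((WithLp.toLp 2 (fun j => z i j s)) : EuclideanSpace ℝ (Fin N))) (Set.Ioi 0) := by
        intro s hs
        apply ContinuousAt.continuousWithinAt
        exact (PiLp.continuous_toLp (p := 2) (β := fun _ : Fin N => ℝ)).continuousAt.comp
          (continuousAt_pi.2 fun j => (hz i j s (le_of_lt hs)).continuousAt)
      exact (((hpg.comp_continuousOn hzcont)).neg).pow 2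
    have hboundae : ∀ s ∈ Set.Ioi (0:ℝ),
        ‖(-(pgrad (f i) i (WithLp.toLp 2 (fun j => z i j s))))^2‖ ≤ C2 * Real.exp (-(2*η)*s) := by
      intro s hs
      have h := hdecay i s (le_of_lt hs)
      have hexp2 : Real.exp (-η*s)^2 = Real.exp (-(2*η)*s) := by
        rw [sq, ← Real.exp_add]
        exact congrArg Real.exp (by ring)
      have habs : ‖(-(pgrad (f i) i (WithLp.toLp 2 (fun j => z i j s))))^2‖
          = |pgrad (f i) i (WithLp.toLp 2 (fun j => z i j s))|^2 := by
        rw [Real.norm_eq_abs, abs_of_nonneg (sq_nonneg _), neg_sq, ← sq_abs]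
      rw [habs]
      have h2 := pow_le_pow_left₀ (abs_nonneg _) h 2
      rw [hC2def]
      calc |pgrad (f i) i (WithLp.toLp 2 (fun j => z i j s))|^2
          ≤ (l i * η₁ * Real.exp (-η*s))^2 := h2
        _ = (l i * η₁)^2 * Real.exp (-η*s)^2 := by ring
        _ = (l i * η₁)^2 * Real.exp (-(2*η)*s) := by rw [hexp2]
    have hmeas' : MeasureTheory.AEStronglyMeasurable
        (fun s => (-(pgrad (f i) i (WithLp.toLp 2 (fun j => z i j s))))^2)
        (MeasureTheory.volume.restrict (Set.Ioi 0)) :=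
      hmeas.aestronglyMeasurable measurableSet_Ioi
    have hint : MeasureTheory.IntegrableOn
        (fun s => (-(pgrad (f i) i (WithLp.toLp 2 (fun j => z i j s))))^2) (Set.Ioi 0) :=
      MeasureTheory.Integrable.mono' hint_dom hmeas'
        ((MeasureTheory.ae_restrict_iff' measurableSet_Ioi).2
          (Filter.Eventually.of_forall hboundae))
    refine ⟨C2 / (2*η) + 1, by positivity, hint, ?_⟩
    have hmono2 := MeasureTheory.setIntegral_mono_on hint hint_dom measurableSet_Ioi
      (fun s hs => by
        have hb := hboundae s hs
        have h0 : (-(pgrad (f i) i (WithLp.toLp 2 (fun j => z i j s))))^2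
            ≤ ‖(-(pgrad (f i) i (WithLp.toLp 2 (fun j => z i j s))))^2‖ := le_abs_self _
        linarith)
    rw [hint_val] at hmono2
    linarith [hmono2]
end
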